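/- Let B be a connected k-category admitting a universal covering U : 𝒰 → B, and let F : C → B be a Galois covering. Then Aut₁U acts transitively (on the right, by precomposition) on the set of k-linear functors X : 𝒰 → C with F ∘ X = U: for any such X and X', there exists g ∈ Aut₁U with X ∘ g = X'. -/

import Mathlib

open CategoryTheory

universe w v u

section CoveringDefs

variable (k : Type w) [CommRing k]

/-- A functor between `k`-linear categories is `k`-linear:
it is additive and commutes with the scalar action on morphisms. -/
def IsLinearFunctor {C : Type u} [Category.{v} C] [Preadditive C] [CategoryTheory.Linear k C]
    {B : Type u} [Category.{v} B] [Preadditive B] [CategoryTheory.Linear k B]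
    (F : C ⥤ B) : Prop :=
  (∀ (x y : C) (f g : x ⟶ y), F.map (f + g) = F.map f + F.map g) ∧
  (∀ (x y : C) (r : k) (f : x ⟶ y), F.map (r • f) = r • F.map f)

variable {C : Type u} [Category.{v} C] [Preadditive C] [CategoryTheory.Linear k C]
variable {B : Type u} [Category.{v} B] [Preadditive B] [CategoryTheory.Linear k B]

/-- The canonical map `⊕_{y ∈ F⁻¹(c)} C(x,y) →+ B(F(x),c)` induced by `F`
on the source star. -/
noncomputable def starOutHom (F : C ⥤ B) (hF : IsLinearFunctor k F) (x : C) (c : B) :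
    (DirectSum {y : C // F.obj y = c} (fun y => (x ⟶ y.1))) →+ (F.obj x ⟶ c) := by
  classical
  exact DirectSum.toAddMonoid fun y =>
    AddMonoidHom.mk' (fun f => F.map f ≫ eqToHom y.2)
      (fun f g => by (try simp only []); rw [hF.1 _ _ f g, Preadditive.add_comp])

/-- The canonical map `⊕_{y ∈ F⁻¹(c)} C(y,x) →+ B(c,F(x))` induced by `F`
on the target star. -/
noncomputable def starInHom (F : C ⥤ B) (hF : IsLinearFunctor k F) (x : C) (c : B) :
    (DirectSum {y : C // F.obj y = c} (fun y => (y.1 ⟶ x))) →+ (c ⟶ F.obj x) := by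
  classical
  exact DirectSum.toAddMonoid fun y =>
    AddMonoidHom.mk' (fun f => eqToHom y.2.symm ≫ F.map f)
      (fun f g => by (try simp only []); rw [hF.1 _ _ f g, Preadditive.comp_add])

/-- `F : C ⥤ B` is a covering of `k`-categories: it is a `k`-linear functor,
surjective on objects, inducing bijections on all source and target stars. -/
def IsCovering (F : C ⥤ B) : Prop :=
  ∃ hF : IsLinearFunctor k F,
    Function.Surjective F.obj ∧
    (∀ (x : C) (c : B), Function.Bijective (starOutHom k F hF x c)) ∧
    (∀ (x : C) (c : B), Function.Bijective (starInHom k F hF x c))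

end CoveringDefs

/-- A `k`-category is connected if the equivalence relation generated by
"there is a nonzero morphism from `x` to `y`" relates any two objects. -/
def IsConnectedKCat (C : Type u) [Category.{v} C] [Preadditive C] : Prop :=
  ∀ x y : C, Relation.EqvGen (fun a b : C => ∃ f : a ⟶ b, f ≠ 0) x y

section GaloisDefs

variable (k : Type w) [CommRing k]
variable {C : Type u} [Category.{v} C] [Preadditive C] [CategoryTheory.Linear k C]
variable {B : Type u} [Category.{v} B] [Preadditive B] [CategoryTheory.Linear k B]
variable {D : Type u} [Category.{v} D] [Preadditive D] [CategoryTheory.Linear k D]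

/-- `H` belongs to `Aut₁ F`: it is an invertible `k`-linear endofunctor with `F ∘ H = F`. -/
def MemAut1 (F : C ⥤ B) (H : C ⥤ C) : Prop :=
  IsLinearFunctor k H ∧
  (∃ Hinv : C ⥤ C, H ⋙ Hinv = 𝟭 C ∧ Hinv ⋙ H = 𝟭 C) ∧
  H ⋙ F = F

/-- A covering is Galois if its source is connected and `Aut₁ F` acts transitively
on some fibre. -/
def IsGaloisCovering (F : C ⥤ B) : Prop :=
  IsCovering k F ∧ IsConnectedKCat C ∧
  ∃ b₀ : B, ∀ x y : C, F.obj x = b₀ → F.obj y = b₀ →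
    ∃ H : C ⥤ C, MemAut1 k F H ∧ H.obj x = y

/-- A morphism `(H, J)` of coverings from `F : C ⥤ B` to `G : D ⥤ B`:
`H` and `J` are `k`-linear, `J` is an isomorphism which is the identity on objects,
and `G ∘ H = J ∘ F`. -/
def IsCoveringMorphism (F : C ⥤ B) (G : D ⥤ B) (H : C ⥤ D) (J : B ⥤ B) : Prop :=
  IsLinearFunctor k H ∧ IsLinearFunctor k J ∧
  (∃ Jinv : B ⥤ B, J ⋙ Jinv = 𝟭 B ∧ Jinv ⋙ J = 𝟭 B) ∧
  (∀ b : B, J.obj b = b) ∧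
  H ⋙ G = F ⋙ J

end GaloisDefs

/-- A universal covering: a Galois covering `U` such that for every Galois covering
`F : C ⥤ B` and every pair of objects `u₀`, `c₀` above the same object of `B`,
there is a unique `k`-linear functor `H` with `F ∘ H = U` and `H u₀ = c₀`. -/
def IsUniversalCovering (k : Type w) [CommRing k]
    {U' : Type u} [Category.{v} U'] [Preadditive U'] [CategoryTheory.Linear k U']
    {B : Type u} [Category.{v} B] [Preadditive B] [CategoryTheory.Linear k B]
    (U : U' ⥤ B) : Prop :=
  IsGaloisCovering k U ∧
  ∀ (C : Type u) [Category.{v} C] [Preadditive C] [CategoryTheory.Linear k C]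
    (F : C ⥤ B), IsGaloisCovering k F →
    ∀ (u₀ : U') (c₀ : C), U.obj u₀ = F.obj c₀ →
      ∃! H : U' ⥤ C, IsLinearFunctor k H ∧ H ⋙ F = U ∧ H.obj u₀ = c₀

/-- Given a functor `F : C ⥤ B`, a choice `x` of objects of `C` above each object of `B`,
and an endofunctor `H` of `C`, the subset `Z_H(c,b) = F(C(x_b, H x_c))` of `B(b,c)`. -/
def gradeSet {C : Type u} [Category.{v} C] {B : Type u} [Category.{v} B]
    (F : C ⥤ B) (x : B → C) (H : C ⥤ C) (b c : B) : Set (b ⟶ c) :=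
  {g | ∃ (h₁ : b = F.obj (x b)) (h₂ : F.obj (H.obj (x c)) = c)
        (f : x b ⟶ H.obj (x c)), g = eqToHom h₁ ≫ F.map f ≫ eqToHom h₂}

/-- The homogeneous component `Z_H(c,b)` as a `k`-submodule of `B(b,c)`. -/
noncomputable def gradeSubmodule (k : Type w) [CommRing k]
    {C : Type u} [Category.{v} C]
    {B : Type u} [Category.{v} B] [Preadditive B] [CategoryTheory.Linear k B]
    (F : C ⥤ B) (x : B → C) (H : C ⥤ C) (b c : B) : Submodule k (b ⟶ c) :=
  Submodule.span k (gradeSet F x H b c)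

/-!
Any lift `X : U' ⥤ C` of `U` through `F` is surjective on objects: if `f : X u ⟶ b` is nonzero,
lift `F f` along the star of `U` at `u` and push the result forward by `X`; this is a preimage of
`F f` under the (injective) star map of `F`, supported on the image of `X`, so `b` lies in that
image (dually for morphisms into `X u`), and `C` is connected. Hence `X' u₀ = X u₁` for some `u₁`
in the fibre of `U u₀`. The universal property of `U`, applied to `U` itself, gives a
deck transformation `g` with `g u₀ = u₁`, and `g ⋙ X = X'` because both lift `U` and agree at `u₀`.
-/

open DirectSum

theorem DirectSum.toAddMonoid_of_comp_apply_of_notMem_range {ι κ : Type*}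
    [DecidableEq ι] [DecidableEq κ] {N : ι → Type*} {M : κ → Type*} [∀ i, AddCommMonoid (N i)]
    [∀ i, AddCommMonoid (M i)] (j : ι → κ) (φ : ∀ i, N i →+ M (j i)) (s : ⨁ i, N i)
    {b : κ} (hb : b ∉ Set.range j) :
    toAddMonoid (fun i => (of M (j i)).comp (φ i)) s b = 0 := by
  induction s using DirectSum.induction_on with
  | zero => simp
  | of i n => simpa using of_eq_of_ne _ _ _ fun h => hb ⟨i, h.symm⟩
  | add s t hs ht => simp [hs, ht]

theorem DirectSum.eq_zero_of_notMem_range_of_comm {ι κ : Type*} [DecidableEq ι] [DecidableEq κ]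
    {N : ι → Type*} {M : κ → Type*} [∀ i, AddCommMonoid (N i)] [∀ i, AddCommMonoid (M i)]
    {A A' : Type*} [AddCommMonoid A] [AddCommMonoid A']
    (j : ι → κ) (φ : ∀ i, N i →+ M (j i)) (p : (⨁ i, N i) →+ A) (q : (⨁ i, M i) →+ A')
    (e : A →+ A') (hp : Function.Surjective p) (hq : Function.Injective q)
    (hcomm : ∀ i n, q (of M (j i) (φ i n)) = e (p (of N i n)))
    {b : κ} (hb : b ∉ Set.range j) (m : M b) (hm : q (of M b m) ∈ Set.range e) : m = 0 := by
  obtain ⟨a, ha⟩ := hm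
  obtain ⟨s, rfl⟩ := hp a
  set ψ := toAddMonoid fun i => (of M (j i)).comp (φ i)
  have hψ : q.comp ψ = e.comp p := addHom_ext fun i n => by simp [ψ, hcomm]
  have hs : ψ s = of M b m := hq (by rw [← ha, ← AddMonoidHom.comp_apply, hψ]; rfl)
  calc m = of M b m b := (of_eq_same b m).symm
    _ = 0 := by rw [← hs]; exact toAddMonoid_of_comp_apply_of_notMem_range j φ s hb

section Coverings

variable {k : Type w} [CommRing k]
variable {U' : Type u} [Category.{v} U'] [Preadditive U'] [CategoryTheory.Linear k U']
variable {B : Type u} [Category.{v} B] [Preadditive B] [CategoryTheory.Linear k B]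
variable {C : Type u} [Category.{v} C] [Preadditive C] [CategoryTheory.Linear k C]

theorem IsLinearFunctor.id : IsLinearFunctor k (𝟭 C) :=
  ⟨fun _ _ _ _ => rfl, fun _ _ _ _ => rfl⟩

theorem IsLinearFunctor.comp {D : Type u} [Category.{v} D] [Preadditive D]
    [CategoryTheory.Linear k D] {P : C ⥤ B} {Q : B ⥤ D}
    (hP : IsLinearFunctor k P) (hQ : IsLinearFunctor k Q) : IsLinearFunctor k (P ⋙ Q) :=
  ⟨fun _ _ f g => by simp only [Functor.comp_map, hP.1 _ _ f g, hQ.1],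
   fun _ _ r f => by simp only [Functor.comp_map, hP.2 _ _ r f, hQ.2]⟩

theorem starOutHom_of (F : C ⥤ B) (hF : IsLinearFunctor k F) (x : C) (c : B)
    [DecidableEq {y : C // F.obj y = c}]
    (y : {y : C // F.obj y = c}) (f : x ⟶ y.1) :
    starOutHom k F hF x c (of (fun y : {y : C // F.obj y = c} => x ⟶ y.1) y f) =
      F.map f ≫ eqToHom y.2 :=
  toAddMonoid_of _ _ _

theorem starInHom_of (F : C ⥤ B) (hF : IsLinearFunctor k F) (x : C) (c : B)
    [DecidableEq {y : C // F.obj y = c}]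
    (y : {y : C // F.obj y = c}) (f : y.1 ⟶ x) :
    starInHom k F hF x c (of (fun y : {y : C // F.obj y = c} => y.1 ⟶ x) y f) =
      eqToHom y.2.symm ≫ F.map f :=
  toAddMonoid_of _ _ _

theorem mem_range_obj_of_hom_from_ne_zero {U : U' ⥤ B} {F : C ⥤ B} (hU : IsCovering k U)
    (hF : IsCovering k F) {X : U' ⥤ C} (hXlin : IsLinearFunctor k X) (hX : X ⋙ F = U)
    {u : U'} {b : C} (f : X.obj u ⟶ b) (hf : f ≠ 0) : b ∈ Set.range X.obj := by
  classical
  obtain ⟨hUlin, -, hUout, -⟩ := hU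
  obtain ⟨hFlin, -, hFout, -⟩ := hF
  have : X.Additive := ⟨hXlin.1 _ _ _ _⟩
  have hu : F.obj (X.obj u) = U.obj u := Functor.congr_obj hX u
  by_contra hb
  refine hf (eq_zero_of_notMem_range_of_comm
    (fun y => ⟨X.obj y.1, (Functor.congr_obj hX y.1).trans y.2⟩) (fun _ => X.mapAddHom)
    (starOutHom k U hUlin u (F.obj b)) (starOutHom k F hFlin (X.obj u) (F.obj b))
    (Preadditive.leftComp _ (eqToHom hu)) (hUout _ _).2 (hFout _ _).1 (fun y g => ?_)
    (b := ⟨b, rfl⟩) (fun ⟨y, hy⟩ => hb ⟨y.1, congrArg Subtype.val hy⟩) f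
    ⟨eqToHom hu.symm ≫ F.map f, ?_⟩)
  · have hg : F.map (X.map g) = _ := Functor.congr_hom hX g
    rw [starOutHom_of, starOutHom_of, Functor.coe_mapAddHom, hg]
    simp [Preadditive.leftComp]
  · rw [starOutHom_of]
    simp [Preadditive.leftComp]

theorem mem_range_obj_of_hom_to_ne_zero {U : U' ⥤ B} {F : C ⥤ B} (hU : IsCovering k U)
    (hF : IsCovering k F) {X : U' ⥤ C} (hXlin : IsLinearFunctor k X) (hX : X ⋙ F = U)
    {u : U'} {b : C} (f : b ⟶ X.obj u) (hf : f ≠ 0) : b ∈ Set.range X.obj := by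
  classical
  obtain ⟨hUlin, -, -, hUin⟩ := hU
  obtain ⟨hFlin, -, -, hFin⟩ := hF
  have : X.Additive := ⟨hXlin.1 _ _ _ _⟩
  have hu : F.obj (X.obj u) = U.obj u := Functor.congr_obj hX u
  by_contra hb
  refine hf (eq_zero_of_notMem_range_of_comm
    (fun y => ⟨X.obj y.1, (Functor.congr_obj hX y.1).trans y.2⟩) (fun _ => X.mapAddHom)
    (starInHom k U hUlin u (F.obj b)) (starInHom k F hFlin (X.obj u) (F.obj b))
    (Preadditive.rightComp _ (eqToHom hu.symm)) (hUin _ _).2 (hFin _ _).1 (fun y g => ?_)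
    (b := ⟨b, rfl⟩) (fun ⟨y, hy⟩ => hb ⟨y.1, congrArg Subtype.val hy⟩) f
    ⟨F.map f ≫ eqToHom hu, ?_⟩)
  · have hg : F.map (X.map g) = _ := Functor.congr_hom hX g
    rw [starInHom_of, starInHom_of, Functor.coe_mapAddHom, hg]
    simp [Preadditive.rightComp]
  · rw [starInHom_of]
    simp [Preadditive.rightComp]

theorem obj_surjective_of_comp_eq [Nonempty U'] {U : U' ⥤ B} {F : C ⥤ B} (hU : IsCovering k U)
    (hF : IsCovering k F) (hC : IsConnectedKCat C) {X : U' ⥤ C} (hXlin : IsLinearFunctor k X)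
    (hX : X ⋙ F = U) : Function.Surjective X.obj := by
  obtain ⟨u₀⟩ := ‹Nonempty U'›
  suffices h : ∀ a b, Relation.EqvGen (fun a b : C => ∃ f : a ⟶ b, f ≠ 0) a b →
      (a ∈ Set.range X.obj ↔ b ∈ Set.range X.obj) from
    fun c => (h _ _ (hC (X.obj u₀) c)).1 ⟨u₀, rfl⟩
  intro a b hab
  induction hab with
  | rel a b hab =>
    obtain ⟨f, hf⟩ := hab
    constructor
    · rintro ⟨u, rfl⟩
      exact mem_range_obj_of_hom_from_ne_zero hU hF hXlin hX f hf
    · rintro ⟨u, rfl⟩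
      exact mem_range_obj_of_hom_to_ne_zero hU hF hXlin hX f hf
  | refl => exact Iff.rfl
  | symm _ _ _ ih => exact ih.symm
  | trans _ _ _ _ _ ih₁ ih₂ => exact ih₁.trans ih₂

namespace IsUniversalCovering

theorem lift_unique {U : U' ⥤ B} (hU : IsUniversalCovering k U) {F : C ⥤ B}
    (hF : IsGaloisCovering k F) {H₁ H₂ : U' ⥤ C}
    (hH₁lin : IsLinearFunctor k H₁) (hH₁ : H₁ ⋙ F = U)
    (hH₂lin : IsLinearFunctor k H₂) (hH₂ : H₂ ⋙ F = U)
    {u₀ : U'} (h : H₁.obj u₀ = H₂.obj u₀) : H₁ = H₂ :=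
  (hU.2 C F hF u₀ (H₂.obj u₀) (Functor.congr_obj hH₂ u₀).symm).unique
    ⟨hH₁lin, hH₁, h⟩ ⟨hH₂lin, hH₂, rfl⟩

theorem exists_memAut1_obj_eq {U : U' ⥤ B} (hU : IsUniversalCovering k U) {u₀ u₁ : U'}
    (h : U.obj u₀ = U.obj u₁) :
    ∃ g : U' ⥤ U', MemAut1 k U g ∧ g.obj u₀ = u₁ := by
  obtain ⟨g, ⟨hglin, hgU, hgu₀⟩, -⟩ := hU.2 U' U hU.1 u₀ u₁ h
  obtain ⟨g', ⟨hg'lin, hg'U, hg'u₁⟩, -⟩ := hU.2 U' U hU.1 u₁ u₀ h.symm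
  refine ⟨g, ⟨hglin, ⟨g', ?_, ?_⟩, hgU⟩, hgu₀⟩
  · exact hU.lift_unique hU.1 (hglin.comp hg'lin) (by rw [Functor.assoc, hg'U, hgU])
      IsLinearFunctor.id (Functor.id_comp U) (u₀ := u₀) (by simp [hgu₀, hg'u₁])
  · exact hU.lift_unique hU.1 (hg'lin.comp hglin) (by rw [Functor.assoc, hgU, hg'U])
      IsLinearFunctor.id (Functor.id_comp U) (u₀ := u₁) (by simp [hgu₀, hg'u₁])

end IsUniversalCovering

end Coverings

theorem aut_universal_transitive_on_morphisms_general (k : Type w) [CommRing k]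
    {U' : Type u} [Category.{v} U'] [Preadditive U'] [CategoryTheory.Linear k U']
    {B : Type u} [Category.{v} B] [Preadditive B] [CategoryTheory.Linear k B]
    {C : Type u} [Category.{v} C] [Preadditive C] [CategoryTheory.Linear k C]
    (U : U' ⥤ B) (hU : IsUniversalCovering k U)
    (F : C ⥤ B) (hF : IsGaloisCovering k F)
    (X X' : U' ⥤ C) (hXlin : IsLinearFunctor k X) (hX : X ⋙ F = U)
    (hX'lin : IsLinearFunctor k X') (hX' : X' ⋙ F = U) :
    ∃ g : U' ⥤ U', MemAut1 k U g ∧ g ⋙ X = X' := by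
  rcases isEmpty_or_nonempty (α := U') with hU' | hU'
  · exact ⟨𝟭 U', ⟨IsLinearFunctor.id, ⟨𝟭 U', rfl, rfl⟩, Functor.id_comp U⟩,
      CategoryTheory.Functor.ext (fun x => isEmptyElim x) fun x => isEmptyElim x⟩
  have u₀ : U' := Classical.arbitrary U'
  obtain ⟨u₁, hu₁⟩ := obj_surjective_of_comp_eq hU.1.1 hF.1 hF.2.1 hXlin hX (X'.obj u₀)
  have hfibre : U.obj u₀ = U.obj u₁ :=
    calc U.obj u₀ = F.obj (X'.obj u₀) := (Functor.congr_obj hX' u₀).symm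
      _ = U.obj u₁ := by rw [← hu₁]; exact Functor.congr_obj hX u₁
  obtain ⟨g, hg, hgu₀⟩ := hU.exists_memAut1_obj_eq hfibre
  exact ⟨g, hg, hU.lift_unique hF (hg.1.comp hXlin) (by rw [Functor.assoc, hX, hg.2.2])
    hX'lin hX' (u₀ := u₀) (by simp [hgu₀, hu₁])⟩

theorem aut_universal_transitive_on_morphisms (k : Type w) [CommRing k]
    {U' : Type u} [Category.{v} U'] [Preadditive U'] [CategoryTheory.Linear k U']
    {B : Type u} [Category.{v} B] [Preadditive B] [CategoryTheory.Linear k B]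
    {C : Type u} [Category.{v} C] [Preadditive C] [CategoryTheory.Linear k C]
    (hB : IsConnectedKCat B)
    (U : U' ⥤ B) (hU : IsUniversalCovering k U)
    (F : C ⥤ B) (hF : IsGaloisCovering k F)
    (X X' : U' ⥤ C) (hXlin : IsLinearFunctor k X) (hX : X ⋙ F = U)
    (hX'lin : IsLinearFunctor k X') (hX' : X' ⋙ F = U) :
    ∃ g : U' ⥤ U', MemAut1 k U g ∧ g ⋙ X = X' :=
  aut_universal_transitive_on_morphisms_general k U hU F hF X X' hXlin hX hX'lin hX'
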